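/- arXiv:1511.00020 — 2 statements merged into one kernel-verified Lean document; each statement's English description precedes it below -/
import Mathlib

section
/- With A, A²B̄, φAB̄ nontrivial and y ∉ {0,1}, the sums α := G(A²B̄)·G(φĀB)·Σ_t Ā²B(1-t)·φAB̄(y-t²) and β := φBA(-1)·A²B̄(2)·G(φ)·G(A)·Σ_t A²B̄(1-t)·Ā(1-y-t²) are equal. -/
/-!
For `χ ≠ 1` the twisted Gauss sum `∑ v, χ v * ψ (v * x)` equals `χ⁻¹ x * G(χ)`, so `α` is a triple
sum `∑ u, ∑ v, χ₂ u * χ₁ v * ∑ t, ψ (v * (1 - t) + u * (y - t²))` with `χ₁ = A²B̄`, `χ₂ = φĀB`.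
The sum over `t` is a quadratic Gauss sum; completing the square evaluates it as
`φ (-u) * G(φ) * ψ (…)`, since `#{t | t² = x} = 1 + φ x` (on `F_q` a nontrivial quadratic
character is the Legendre character). The substitution `v = 2u(s - 1)` makes the phase `u * (s² + y - 1)`,
the characters in `u` multiply to `χ₁ χ₂ φ = A`, and the sum over `u` is again a twisted Gauss sum,
`Ā(s² + y - 1) * G(A)`.
-/

open Complex Finset

variable {F : Type*} [Field F] [Fintype F]

/-- Canonical additive character `ζ^y = exp((2πi/p)·Tr_{F_q/F_p}(y))`. -/
noncomputable def zetaChar (p : ℕ) [Fact p.Prime] [CharP F p] (y : F) : ℂ :=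
  letI := ZMod.algebra F p
  Complex.exp (2 * Real.pi * Complex.I * ((Algebra.trace (ZMod p) F y).val : ℂ) / p)

/-- Gauss sum `G(A) = Σ_y A(y) ζ^y`. -/
noncomputable def gaussS (p : ℕ) [Fact p.Prime] [CharP F p] (A : MulChar F ℂ) : ℂ :=
  ∑ y : F, A y * zetaChar p y

/-- Jacobi sum `J(A,B) = Σ_y A(y) B(1-y)`. -/
noncomputable def jacobiS (A B : MulChar F ℂ) : ℂ :=
  ∑ y : F, A y * B (1 - y)

/-- Finite field hypergeometric `₂F₁(A,B;C;x) = (ε(x)/q) Σ_y B(y) B̄C(y-1) Ā(1-xy)`. -/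
noncomputable def F21 (A B C : MulChar F ℂ) (x : F) : ℂ :=
  ((1 : MulChar F ℂ) x / (Fintype.card F : ℂ)) *
    ∑ y : F, B y * (B⁻¹ * C) (y - 1) * A⁻¹ (1 - x * y)

/-- Binomial coefficient `(A choose B) = (B(-1)/q) J(A, B̄)`. -/
noncomputable def binom (A B : MulChar F ℂ) : ℂ :=
  B (-1) / (Fintype.card F : ℂ) * jacobiS A B⁻¹

/-- Pseudo hypergeometric function `F*(C,D;x)`. -/
noncomputable def Fstar (C D : MulChar F ℂ) (x : F) : ℂ :=
  letI : Fintype (MulChar F ℂ) := Fintype.ofFinite _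
  (Fintype.card F : ℂ) / ((Fintype.card F : ℂ) - 1) *
      ∑ χ : MulChar F ℂ, binom (C * χ ^ 2) χ * binom (C * χ) (D * χ) * χ (x / 4)
    + (C * D) (-1) * C⁻¹ (x / 4) / (Fintype.card F : ℂ)

noncomputable def zetaAddChar (p : ℕ) [Fact p.Prime] [CharP F p] : AddChar F ℂ :=
  letI := ZMod.algebra F p
  ZMod.stdAddChar.compAddMonoidHom (Algebra.trace (ZMod p) F).toAddMonoidHom

omit [Fintype F] in
theorem zetaAddChar_apply (p : ℕ) [Fact p.Prime] [CharP F p] (x : F) :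
    zetaAddChar p x = zetaChar p x := by
  let := ZMod.algebra F p
  have h := ZMod.stdAddChar_coe (N := p) ((Algebra.trace (ZMod p) F x).val : ℤ)
  rw [Int.cast_natCast, ZMod.natCast_zmod_val] at h
  change ZMod.stdAddChar (Algebra.trace (ZMod p) F x) = _
  rw [h, zetaChar]
  push_cast
  ring_nf

theorem zetaAddChar_ne_one (p : ℕ) [Fact p.Prime] [CharP F p] : zetaAddChar (F := F) p ≠ 1 := by
  obtain rfl : p = ringChar F := (ringChar.eq F p).symm
  let := ZMod.algebra F (ringChar F)
  obtain ⟨b, hb⟩ := FiniteField.trace_to_zmod_nondegenerate F (one_ne_zero (α := F))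
  rw [one_mul] at hb
  refine AddChar.ne_one_iff.mpr ⟨b, fun h ↦ hb (ZMod.injective_stdAddChar ?_)⟩
  rwa [AddChar.map_zero_eq_one]

theorem gaussS_eq_gaussSum (p : ℕ) [Fact p.Prime] [CharP F p] (χ : MulChar F ℂ) :
    gaussS p χ = gaussSum χ (zetaAddChar p) := by
  simp only [gaussS, gaussSum, zetaAddChar_apply]

section

variable {R : Type*} [CommRing R] [IsDomain R]

theorem sum_mulChar_mul_addChar_mul {χ : MulChar F R} (hχ : χ ≠ 1) (ψ : AddChar F R) (x : F) :
    ∑ u, χ u * ψ (u * x) = χ⁻¹ x * gaussSum χ ψ := by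
  rcases eq_or_ne x 0 with rfl | hx
  · simp [MulChar.sum_eq_zero_of_ne_one hχ, MulChar.map_zero]
  · simpa [mul_comm _ x, gaussSum] using gaussSum_mulShift_eq χ ψ (Units.mk0 x hx)

theorem MulChar.IsQuadratic.apply_eq_neg_one_of_generator {M S : Type*} [CommMonoid M]
    [CommRing S] [Nontrivial S] {χ : MulChar M S} (hχq : χ.IsQuadratic) (hχ : χ ≠ 1) {g : Mˣ}
    (hg : ∀ x, x ∈ Subgroup.zpowers g) : χ g = -1 := by
  rcases hχq g with h | h | h
  · exact absurd (h ▸ g.isUnit.map χ) not_isUnit_zero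
  · exact absurd ((MulChar.eq_iff hg χ 1).mpr (by simp [h])) hχ
  · exact h

theorem MulChar.IsQuadratic.eq_quadraticChar [DecidableEq F] (hF : ringChar F ≠ 2)
    {φ : MulChar F R} (hφq : φ.IsQuadratic) (hφ : φ ≠ 1) :
    φ = (quadraticChar F).ringHomComp (Int.castRingHom R) := by
  obtain ⟨g, hg⟩ := IsCyclic.exists_generator (α := Fˣ)
  rw [MulChar.eq_iff hg, hφq.apply_eq_neg_one_of_generator hφ hg, MulChar.ringHomComp_apply,
    (quadraticChar_isQuadratic F).apply_eq_neg_one_of_generator (quadraticChar_ne_one hF) hg]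
  simp

theorem sum_addChar_mul_sq (hF : ringChar F ≠ 2) {ψ : AddChar F R} (hψ : ψ ≠ 1)
    {φ : MulChar F R} (hφq : φ.IsQuadratic) (hφ : φ ≠ 1) {a : F} (ha : a ≠ 0) :
    ∑ t, ψ (a * t ^ 2) = φ a * gaussSum φ ψ := by
  classical
  have card_sqrts (x : F) : (#{t | t ^ 2 = x} : R) = φ x + 1 := by
    rw [hφq.eq_quadraticChar hF hφ, MulChar.ringHomComp_apply]
    simpa using congrArg (Int.cast (R := R)) (quadraticChar_card_sqrts hF x)
  calc ∑ t, ψ (a * t ^ 2)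
      = ∑ x, (#{t | t ^ 2 = x} : R) * ψ (x * a) := by
        simp_rw [mul_comm a]
        rw [← sum_fiberwise' univ (· ^ 2) (fun x ↦ ψ (x * a))]
        simp
    _ = ∑ x, φ x * ψ (x * a) + ∑ x, ψ (x * a) := by
        simp only [card_sqrts, add_mul, one_mul, sum_add_distrib]
    _ = φ a * gaussSum φ ψ := by
        rw [sum_mulChar_mul_addChar_mul hφ, hφq.inv,
          AddChar.sum_mulShift a (AddChar.IsPrimitive.of_ne_one hψ), if_neg ha, Nat.cast_zero,
          add_zero]

theorem sum_addChar_quadratic (hF : ringChar F ≠ 2) {ψ : AddChar F R} (hψ : ψ ≠ 1)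
    {φ : MulChar F R} (hφq : φ.IsQuadratic) (hφ : φ ≠ 1) {a : F} (ha : a ≠ 0) (b c : F) :
    ∑ t, ψ (a * t ^ 2 + b * t + c) = φ a * gaussSum φ ψ * ψ (c - b ^ 2 / (4 * a)) := by
  have h2 : (2 : F) ≠ 0 := Ring.two_ne_zero hF
  have complete_square (t : F) :
      a * t ^ 2 + b * t + c = a * (t + b / (2 * a)) ^ 2 + (c - b ^ 2 / (4 * a)) := by
    field_simp [show (4 : F) = 2 * 2 by norm_num]
    ring
  simp_rw [complete_square, AddChar.map_add_eq_mul, ← sum_mul]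
  rw [Fintype.sum_equiv (Equiv.addRight (b / (2 * a))) (fun t ↦ ψ (a * (t + b / (2 * a)) ^ 2))
      (fun t ↦ ψ (a * t ^ 2)) (fun _ ↦ rfl),
    sum_addChar_mul_sq hF hψ hφq hφ ha]

theorem gaussSum_mul_gaussSum_mul_sum_eq_sum_sum {χ₁ χ₂ : MulChar F R} (hχ₁ : χ₁ ≠ 1)
    (hχ₂ : χ₂ ≠ 1) (ψ : AddChar F R) (f g : F → F) :
    gaussSum χ₁ ψ * gaussSum χ₂ ψ * ∑ t, χ₁⁻¹ (f t) * χ₂⁻¹ (g t) =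
      ∑ u, ∑ v, χ₂ u * χ₁ v * ∑ t, ψ (v * f t + u * g t) := by
  calc gaussSum χ₁ ψ * gaussSum χ₂ ψ * ∑ t, χ₁⁻¹ (f t) * χ₂⁻¹ (g t)
      = ∑ t, (∑ v, χ₁ v * ψ (v * f t)) * ∑ u, χ₂ u * ψ (u * g t) := by
        rw [mul_sum]
        congr! 1 with t
        rw [sum_mulChar_mul_addChar_mul hχ₁, sum_mulChar_mul_addChar_mul hχ₂]
        ring
    _ = ∑ u, ∑ v, χ₂ u * χ₁ v * ∑ t, ψ (v * f t + u * g t) := by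
        simp_rw [sum_mul_sum, mul_sum, AddChar.map_add_eq_mul]
        rw [sum_comm]
        conv_rhs => rw [sum_comm]
        refine sum_congr rfl fun v _ ↦ ?_
        rw [sum_comm]
        exact sum_congr rfl fun u _ ↦ sum_congr rfl fun t _ ↦ by ring

theorem sum_mulChar_mul_sum_addChar_eq (hF : ringChar F ≠ 2) {ψ : AddChar F R} (hψ : ψ ≠ 1)
    {φ : MulChar F R} (hφq : φ.IsQuadratic) (hφ : φ ≠ 1) (χ : MulChar F R) {u : F} (hu : u ≠ 0)
    (y : F) :
    ∑ v, χ v * ∑ t, ψ (v * (1 - t) + u * (y - t ^ 2)) =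
      φ (-u) * gaussSum φ ψ * χ (2 * u) * ∑ s, χ (s - 1) * ψ (u * (s ^ 2 + y - 1)) := by
  have h2 : (2 : F) ≠ 0 := Ring.two_ne_zero hF
  have h2u : 2 * u ≠ 0 := mul_ne_zero h2 hu
  have as_quadratic (v t : F) :
      v * (1 - t) + u * (y - t ^ 2) = -u * t ^ 2 + -v * t + (v + u * y) := by ring
  simp_rw [as_quadratic, sum_addChar_quadratic hF hψ hφq hφ (neg_ne_zero.mpr hu), mul_sum]
  symm
  refine Fintype.sum_equiv ((Equiv.subRight 1).trans (Equiv.mulLeft₀ (2 * u) h2u)) _ _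
    fun s ↦ ?_
  have completed : 2 * u * (s - 1) + u * y - (-(2 * u * (s - 1))) ^ 2 / (4 * -u) =
      u * (s ^ 2 + y - 1) := by
    field_simp [show (4 : F) = 2 * 2 by norm_num]
    ring
  simp only [Equiv.trans_apply, Equiv.subRight_apply, Equiv.mulLeft₀_apply]
  rw [completed, map_mul χ (2 * u) (s - 1)]
  ring

theorem gaussSum_mul_gaussSum_mul_sum_eq (hF : ringChar F ≠ 2) {ψ : AddChar F R} (hψ : ψ ≠ 1)
    {φ : MulChar F R} (hφq : φ.IsQuadratic) (hφ : φ ≠ 1) {χ₁ χ₂ : MulChar F R} (hχ₁ : χ₁ ≠ 1)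
    (hχ₂ : χ₂ ≠ 1) (hχ : χ₁ * χ₂ * φ ≠ 1) (y : F) :
    gaussSum χ₁ ψ * gaussSum χ₂ ψ * ∑ t, χ₁⁻¹ (1 - t) * χ₂⁻¹ (y - t ^ 2) =
      χ₂ (-1) * χ₁ 2 * gaussSum φ ψ * gaussSum (χ₁ * χ₂ * φ) ψ *
        ∑ t, χ₁ (1 - t) * (χ₁ * χ₂ * φ)⁻¹ (1 - y - t ^ 2) := by
  set χ := χ₁ * χ₂ * φ
  have sq_neg_one (η : MulChar F R) : η (-1) * η (-1) = 1 := by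
    rw [← map_mul, neg_mul_neg, one_mul, map_one]
  have hconst : φ (-1) * χ₁ (-1) * χ⁻¹ (-1) = χ₂ (-1) := by
    rw [MulChar.inv_apply', inv_neg_one]
    simp only [χ, MulChar.mul_apply]
    linear_combination χ₂ (-1) * φ (-1) ^ 2 * sq_neg_one χ₁ + χ₂ (-1) * sq_neg_one φ
  calc gaussSum χ₁ ψ * gaussSum χ₂ ψ * ∑ t, χ₁⁻¹ (1 - t) * χ₂⁻¹ (y - t ^ 2)
      = ∑ u, ∑ v, χ₂ u * χ₁ v * ∑ t, ψ (v * (1 - t) + u * (y - t ^ 2)) :=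
        gaussSum_mul_gaussSum_mul_sum_eq_sum_sum hχ₁ hχ₂ ψ _ _
    _ = ∑ u, χ₂ u * (φ (-u) * gaussSum φ ψ * χ₁ (2 * u) *
          ∑ s, χ₁ (s - 1) * ψ (u * (s ^ 2 + y - 1))) := by
        refine sum_congr rfl fun u _ ↦ ?_
        rcases eq_or_ne u 0 with rfl | hu
        · simp [MulChar.map_zero]
        · rw [← sum_mulChar_mul_sum_addChar_eq hF hψ hφq hφ χ₁ hu, mul_sum]
          simp_rw [mul_assoc]
    _ = φ (-1) * χ₁ 2 * gaussSum φ ψ *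
          ∑ s, χ₁ (s - 1) * ∑ u, χ u * ψ (u * (s ^ 2 + y - 1)) := by
        simp_rw [mul_sum]
        rw [sum_comm]
        refine sum_congr rfl fun s _ ↦ sum_congr rfl fun u _ ↦ ?_
        rw [neg_eq_neg_one_mul u, map_mul, map_mul]
        simp only [χ, MulChar.mul_apply]
        ring
    _ = φ (-1) * χ₁ 2 * gaussSum φ ψ *
          ∑ s, χ₁ (s - 1) * (χ⁻¹ (s ^ 2 + y - 1) * gaussSum χ ψ) := by
        simp_rw [sum_mulChar_mul_addChar_mul hχ]
    _ = χ₂ (-1) * χ₁ 2 * gaussSum φ ψ * gaussSum χ ψ *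
          ∑ t, χ₁ (1 - t) * χ⁻¹ (1 - y - t ^ 2) := by
        rw [← hconst, mul_sum, mul_sum]
        refine sum_congr rfl fun s _ ↦ ?_
        rw [show s - 1 = -1 * (1 - s) by ring, show s ^ 2 + y - 1 = -1 * (1 - y - s ^ 2) by ring,
          map_mul, map_mul]
        ring

end

theorem alpha_eq_beta_general (p : ℕ) [Fact p.Prime] [CharP F p] (hp : p ≠ 2)
    (φ : MulChar F ℂ) (hφ : φ ≠ 1) (hφ2 : φ * φ = 1)
    (A B : MulChar F ℂ) (hA : A ≠ 1) (hA2B : A ^ 2 * B⁻¹ ≠ 1) (hφAB : φ * A * B⁻¹ ≠ 1)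
    (y : F) :
    gaussS p (A ^ 2 * B⁻¹) * gaussS p (φ * A⁻¹ * B) *
        ∑ t : F, (A⁻¹ ^ 2 * B) (1 - t) * (φ * A * B⁻¹) (y - t ^ 2) =
      (φ * B * A) (-1) * (A ^ 2 * B⁻¹) (2 : F) * gaussS p φ * gaussS p A *
        ∑ t : F, (A ^ 2 * B⁻¹) (1 - t) * A⁻¹ (1 - y - t ^ 2) := by
  have hF : ringChar F ≠ 2 := ringChar.eq F p ▸ hp
  have hφq : φ.IsQuadratic := MulChar.isQuadratic_iff_sq_eq_one.mpr (sq φ ▸ hφ2)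
  have inv₁ : (A ^ 2 * B⁻¹)⁻¹ = A⁻¹ ^ 2 * B := by rw [mul_inv, inv_inv, inv_pow]
  have inv₂ : (φ * A⁻¹ * B)⁻¹ = φ * A * B⁻¹ := by rw [mul_inv, mul_inv, inv_inv, hφq.inv]
  have hχ₂ : φ * A⁻¹ * B ≠ 1 := fun h ↦ hφAB (by rw [← inv₂, h, inv_one])
  have hχ : A ^ 2 * B⁻¹ * (φ * A⁻¹ * B) * φ = A :=
    calc _ = A ^ 2 * A⁻¹ * (B⁻¹ * B) * (φ * φ) := by simp only [mul_comm, mul_assoc, mul_left_comm]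
      _ = A := by rw [hφ2, inv_mul_cancel, pow_two, mul_inv_cancel_right, mul_one, mul_one]
  have hsign : (φ * A⁻¹ * B) (-1) = (φ * B * A) (-1) := by
    rw [MulChar.mul_apply, MulChar.mul_apply, MulChar.inv_apply', inv_neg_one,
      MulChar.mul_apply, MulChar.mul_apply]
    ring
  have key := gaussSum_mul_gaussSum_mul_sum_eq hF (zetaAddChar_ne_one p) hφq hφ hA2B hχ₂
    (by rwa [hχ]) y
  rw [hχ, inv₁, inv₂, hsign] at key
  simpa only [gaussS_eq_gaussSum] using key

/-- equality of the two sums `α` and `β` from the proof of Lemma 1. -/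
theorem alpha_eq_beta (p : ℕ) [Fact p.Prime] [CharP F p] (hp : p ≠ 2)
    (φ : MulChar F ℂ) (hφ : φ ≠ 1) (hφ2 : φ * φ = 1)
    (A B : MulChar F ℂ) (hA : A ≠ 1) (hA2B : A ^ 2 * B⁻¹ ≠ 1) (hφAB : φ * A * B⁻¹ ≠ 1)
    (y : F) (hy0 : y ≠ 0) (hy1 : y ≠ 1) :
    gaussS p (A ^ 2 * B⁻¹) * gaussS p (φ * A⁻¹ * B) *
        ∑ t : F, (A⁻¹ ^ 2 * B) (1 - t) * (φ * A * B⁻¹) (y - t ^ 2) =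
      (φ * B * A) (-1) * (A ^ 2 * B⁻¹) (2 : F) * gaussS p φ * gaussS p A *
        ∑ t : F, (A ^ 2 * B⁻¹) (1 - t) * A⁻¹ (1 - y - t ^ 2) :=
  alpha_eq_beta_general p hp φ hφ hφ2 A B hA hA2B hφAB y
end

section
/- (Inversion transformation) For multiplicative characters A, B, C on F_q and x ∈ F_q^*, one has ₂F₁(A,B;C;x) = ABC(-1)·B̄(x)·₂F₁(BC̄, B; BĀ; 1/x). -/
open Complex Finset

variable {F : Type*} [Field F] [Fintype F]

namespace MulChar

variable {R R' : Type*} [CommRing R] [CommMonoidWithZero R'] (χ : MulChar R R')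

theorem apply_neg_one_mul_self : χ (-1) * χ (-1) = 1 := by
  rw [← map_mul, neg_one_mul, neg_neg, map_one]

theorem inv_apply_mul_apply {a : R} (ha : IsUnit a) : χ⁻¹ a * χ a = 1 := by
  rw [← mul_apply, inv_mul, one_apply ha]

theorem inv_apply_neg_one : χ⁻¹ (-1) = χ (-1) := by
  rw [← mul_one (χ⁻¹ (-1)), ← apply_neg_one_mul_self χ, ← mul_assoc,
    inv_apply_mul_apply χ isUnit_one.neg, one_mul]

end MulChar

open MulChar

/-- Substitute `y ↦ x y`; the values at `-1` come from `x y - 1 = -(1 - x y)` and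
`1 - y = -(y - 1)`. -/
theorem F21_inv_eq (A B C : MulChar F ℂ) {x : F} (hx : x ≠ 0) :
    F21 (B * C⁻¹) B (B * A⁻¹) x⁻¹ = (A * B * C) (-1) * B x * F21 A B C x := by
  suffices hsum : ∑ y : F, B y * A⁻¹ (y - 1) * (B⁻¹ * C) (1 - x⁻¹ * y) =
      (A * B * C) (-1) * B x * ∑ y : F, B y * (B⁻¹ * C) (y - 1) * A⁻¹ (1 - x * y) by
    unfold F21
    rw [one_apply (inv_ne_zero hx).isUnit, one_apply hx.isUnit, inv_mul_cancel_left,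
      mul_inv, inv_inv, hsum]
    ring
  rw [← (mulLeft_bijective₀ x hx).sum_comp, mul_sum]
  refine sum_congr rfl fun y _ => ?_
  rw [inv_mul_cancel_left₀ hx, show x * y - 1 = -1 * (1 - x * y) by ring,
    show (1 : F) - y = -1 * (y - 1) by ring]
  simp only [map_mul, mul_apply, inv_apply_neg_one]
  ring

theorem inversion_general (A B C : MulChar F ℂ) (x : F) (hx : x ≠ 0) :
    F21 A B C x =
      (A * B * C) (-1) * B⁻¹ x * F21 (B * C⁻¹) B (B * A⁻¹) (1 / x) := by
  rw [one_div, F21_inv_eq A B C hx]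
  calc F21 A B C x
      = ((A * B * C) (-1) * (A * B * C) (-1)) * (B⁻¹ x * B x) * F21 A B C x := by
        rw [apply_neg_one_mul_self, inv_apply_mul_apply B hx.isUnit, one_mul, one_mul]
    _ = (A * B * C) (-1) * B⁻¹ x * ((A * B * C) (-1) * B x * F21 A B C x) := by ring

/-- inversion: for `x ≠ 0`,
`₂F₁(A,B;C;x) = ABC(-1) B̄(x) ₂F₁(BC̄,B;BĀ;1/x)`. -/
theorem inversion (p : ℕ) [Fact p.Prime] [CharP F p] (hp : p ≠ 2)
    (A B C : MulChar F ℂ) (x : F) (hx : x ≠ 0) :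
    F21 A B C x =
      (A * B * C) (-1) * B⁻¹ x * F21 (B * C⁻¹) B (B * A⁻¹) (1 / x) :=
  inversion_general A B C x hx
end
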